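/- Let y ∈ {0,1}^ℕ be the binary sequence obtained by concatenating the blocks g(1) g(2) g(3) …, where for n ≥ 1 with λ(n) = ⌊log₂ n⌋ + 1 (the length of the binary representation of n), g(n) = 1^{λ(n)} if n = 2^k − 1 for some k ≥ 1, and g(n) = 0^{λ(n)} otherwise. Then y is typical, i.e. lim_{n→∞} L_n(y)/log₂ n = 1. -/

import Mathlib

open Filter

open Classical in
/-- `L_n(x)`: the maximal length of a run of consecutive ones among the first `n`
digits (positions `1,…,n`) of the binary sequence `x`. -/
noncomputable def runL (x : ℕ → Bool) (n : ℕ) : ℕ :=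
  Nat.findGreatest
    (fun j => ∃ i, i + j ≤ n ∧ ∀ k, 1 ≤ k → k ≤ j → x (i + k) = true) n

/-- A binary sequence is typical if `L_n(x)/log₂ n → 1`. -/
def Typical (x : ℕ → Bool) : Prop :=
  Tendsto (fun n : ℕ => (runL x n : ℝ) / Real.logb 2 (n : ℝ)) atTop (nhds 1)

/-- The infinite binary sequence (indexed from 1) obtained by concatenating
the nonempty blocks `b 1, b 2, b 3, …`. -/
def concatSeq (b : ℕ → List Bool) : ℕ → Bool :=
  fun i => (((List.range i).map fun k => b (k + 1)).flatten).getD (i - 1) false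

open Classical in
/-- The block `g(n)`: with `λ(n) = ⌊log₂ n⌋ + 1` the length of the binary
representation of `n`, `g(n) = 1^{λ(n)}` if `n = 2^k − 1` for some `k ≥ 1`,
and `g(n) = 0^{λ(n)}` otherwise. -/
noncomputable def gblock (n : ℕ) : List Bool :=
  if ∃ k, 1 ≤ k ∧ n = 2 ^ k - 1 then List.replicate (Nat.log 2 n + 1) true
  else List.replicate (Nat.log 2 n + 1) false

/-! The runs of ones in `y` are exactly the blocks `g(2^k - 1) = 1^k`: a block of ones is
followed by a block of zeros, because `2^k - 1` and `2^k` are never both Mersenne numbers.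
So with `L = L_n(y)` the prefix `y_1 … y_n` cannot contain the whole block `g(2^(L+1) - 1)`, which
ends before position `2^(L+1) (L+1)`, and it is not contained in the first `2^(L-1) - 1` blocks,
whose runs are shorter than `L`. Thus `2^(L-1) ≤ n ≤ 2^(L+1) (L+1)`, i.e.
`log₂ n = L + O(log L)`. -/

open Topology

section Blocks

variable (b : ℕ → List Bool)

def blockPrefix (m : ℕ) : List Bool := ((List.range m).map fun k => b (k + 1)).flatten

/-- The position of the last digit of the block `b m` in `concatSeq b`. -/
def blockEnd (m : ℕ) : ℕ := (blockPrefix b m).length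

theorem blockPrefix_succ (m : ℕ) : blockPrefix b (m + 1) = blockPrefix b m ++ b (m + 1) := by
  simp [blockPrefix, List.range_succ]

theorem blockEnd_succ (m : ℕ) : blockEnd b (m + 1) = blockEnd b m + (b (m + 1)).length := by
  simp [blockEnd, blockPrefix_succ]

theorem blockPrefix_prefix {m m' : ℕ} (h : m ≤ m') : blockPrefix b m <+: blockPrefix b m' := by
  induction h with
  | refl => exact List.prefix_refl _
  | step _ ih => exact ih.trans (blockPrefix_succ b _ ▸ List.prefix_append _ _)

theorem monotone_blockEnd : Monotone (blockEnd b) :=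
  fun _ _ h => (blockPrefix_prefix b h).length_le

variable {b}

theorem le_blockEnd (hb : ∀ n, b n ≠ []) (m : ℕ) : m ≤ blockEnd b m := by
  induction m with
  | zero => exact Nat.zero_le _
  | succ m ih =>
    have := List.length_pos_iff.2 (hb (m + 1))
    rw [blockEnd_succ]
    omega

theorem blockEnd_le_mul {m c : ℕ} (hc : ∀ k < m, (b (k + 1)).length ≤ c) :
    blockEnd b m ≤ m * c := by
  induction m with
  | zero => exact Nat.zero_le _
  | succ m ih =>
    rw [blockEnd_succ, Nat.succ_mul]
    exact Nat.add_le_add (ih fun k hk => hc k (by omega)) (hc m (by omega))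

theorem exists_blockEnd_lt_le (hb : ∀ n, b n ≠ []) {i : ℕ} (hi : 1 ≤ i) :
    ∃ m, blockEnd b m < i ∧ i ≤ blockEnd b (m + 1) := by
  classical
  have hex : ∃ m, i ≤ blockEnd b m := ⟨i, le_blockEnd hb i⟩
  obtain ⟨m, hm⟩ : ∃ m, Nat.find hex = m + 1 :=
    Nat.exists_eq_add_one.2 <| Nat.pos_of_ne_zero fun h0 => by
      have := Nat.find_spec hex
      rw [h0] at this
      exact absurd this (by simp [blockEnd, blockPrefix]; omega)
  exact ⟨m, not_le.1 (Nat.find_min hex (by omega)), hm ▸ Nat.find_spec hex⟩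

theorem concatSeq_mem_block (hb : ∀ n, b n ≠ []) {m i : ℕ} (h₁ : blockEnd b m < i)
    (h₂ : i ≤ blockEnd b (m + 1)) : concatSeq b i ∈ b (m + 1) := by
  have hi : i - 1 < (blockPrefix b (m + 1)).length := by unfold blockEnd at h₂; omega
  have hread : concatSeq b i = (blockPrefix b (m + 1))[i - 1] := by
    change (blockPrefix b i).getD (i - 1) false = _
    rcases le_total i (m + 1) with h | h
    · have hi' : i - 1 < (blockPrefix b i).length := by
        have := le_blockEnd hb i; unfold blockEnd at this; omega
      rw [List.getD_eq_getElem _ _ hi', (blockPrefix_prefix b h).getElem hi']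
    · have hp := blockPrefix_prefix b h
      rw [List.getD_eq_getElem _ _ (hi.trans_le hp.length_le), ← hp.getElem hi]
  simp only [hread, blockPrefix_succ]
  rw [List.getElem_append_right (by unfold blockEnd at h₁; omega)]
  exact List.getElem_mem _

end Blocks

section RunLength

variable {x : ℕ → Bool} {n : ℕ}

theorem le_runL {i j : ℕ} (hij : i + j ≤ n) (hrun : ∀ k, 1 ≤ k → k ≤ j → x (i + k) = true) :
    j ≤ runL x n := by
  classical
  exact Nat.le_findGreatest (by omega) ⟨i, hij, hrun⟩

theorem runL_le {K : ℕ}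
    (h : ∀ i j, i + j ≤ n → (∀ k, 1 ≤ k → k ≤ j → x (i + k) = true) → j ≤ K) :
    runL x n ≤ K := by
  classical
  obtain ⟨i, hij, hrun⟩ := Nat.findGreatest_spec (P := fun j =>
    ∃ i, i + j ≤ n ∧ ∀ k, 1 ≤ k → k ≤ j → x (i + k) = true) (m := 0) (Nat.zero_le n)
    ⟨0, by simp, fun k hk hk' => by omega⟩
  exact h i _ hij hrun

end RunLength

section Asymptotics

open Real

theorem tendsto_logb_add_one_div_atTop :
    Tendsto (fun x : ℝ => logb 2 (x + 1) / x) atTop (𝓝 0) := by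
  have h := ((tendsto_pow_log_div_mul_add_atTop 1 (-1) 1 one_ne_zero).comp
    (tendsto_atTop_add_const_right _ 1 tendsto_id)).div_const (log 2)
  simpa [logb, div_right_comm] using h

theorem tendsto_div_of_sub_one_le_of_le_add_logb {α : Type*} {l : Filter α} {f g : α → ℝ}
    (hf : Tendsto f l atTop) (hlo : ∀ᶠ a in l, f a - 1 ≤ g a)
    (hhi : ∀ᶠ a in l, g a ≤ f a + 1 + logb 2 (f a + 1)) :
    Tendsto (fun a => f a / g a) l (𝓝 1) := by
  have hinv : Tendsto (fun a => (f a)⁻¹) l (𝓝 0) := tendsto_inv_atTop_zero.comp hf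
  have hlower : Tendsto (fun a => 1 - (f a)⁻¹) l (𝓝 1) := by
    simpa using tendsto_const_nhds.sub hinv
  have hupper : Tendsto (fun a => 1 + (f a)⁻¹ + logb 2 (f a + 1) / f a) l (𝓝 1) := by
    simpa using (tendsto_const_nhds.add hinv).add (tendsto_logb_add_one_div_atTop.comp hf)
  have hgf : Tendsto (fun a => g a / f a) l (𝓝 1) := by
    refine tendsto_of_tendsto_of_tendsto_of_le_of_le' hlower hupper ?_ ?_
    · filter_upwards [hlo, hf.eventually_gt_atTop 0] with a ha hpos
      rw [le_div_iff₀ hpos]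
      field_simp
      linarith
    · filter_upwards [hhi, hf.eventually_gt_atTop 0] with a ha hpos
      rw [div_le_iff₀ hpos]
      field_simp
      linarith
  simpa using hgf.inv₀ one_ne_zero

theorem tendsto_div_logb_of_pow_bounds {L : ℕ → ℕ} (hL : Tendsto L atTop atTop)
    (hlo : ∀ᶠ n in atTop, 2 ^ L n ≤ 2 * n)
    (hhi : ∀ n, n ≤ 2 ^ (L n + 1) * (L n + 1)) :
    Tendsto (fun n => (L n : ℝ) / logb 2 n) atTop (𝓝 1) := by
  refine tendsto_div_of_sub_one_le_of_le_add_logb (tendsto_natCast_atTop_atTop.comp hL) ?_ ?_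
  · filter_upwards [hlo, eventually_ge_atTop 1] with n hn hn1
    have hpos : (0 : ℝ) < n := by exact_mod_cast hn1
    have : (L n : ℝ) ≤ logb 2 (2 * n) := by
      rw [le_logb_iff_rpow_le one_lt_two (by positivity), rpow_natCast]
      exact_mod_cast hn
    rw [logb_mul two_ne_zero hpos.ne', logb_self_eq_one one_lt_two] at this
    linarith
  · filter_upwards [eventually_ge_atTop 1] with n hn1
    have hpos : (0 : ℝ) < n := by exact_mod_cast hn1
    have hle : (n : ℝ) ≤ 2 ^ (L n + 1) * ((L n : ℝ) + 1) := by exact_mod_cast hhi n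
    calc logb 2 n ≤ logb 2 (2 ^ (L n + 1) * ((L n : ℝ) + 1)) :=
          logb_le_logb_of_le one_lt_two hpos hle
      _ = L n + 1 + logb 2 (L n + 1) := by
          rw [logb_mul (by positivity) (by positivity), logb_pow, logb_self_eq_one one_lt_two]
          push_cast
          ring

end Asymptotics

def IsMersenne (n : ℕ) : Prop := ∃ k, 1 ≤ k ∧ n = 2 ^ k - 1

theorem IsMersenne.not_succ {n : ℕ} (hn : IsMersenne n) : ¬ IsMersenne (n + 1) := by
  rintro ⟨t, ht, hnt⟩
  obtain ⟨r, hr, rfl⟩ := hn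
  have : 2 ∣ 2 ^ r := dvd_pow_self 2 (by omega)
  have : 2 ∣ 2 ^ t := dvd_pow_self 2 (by omega)
  have : 1 ≤ 2 ^ r := Nat.one_le_two_pow
  omega

theorem Nat.log_two_pow_sub_one (k : ℕ) : Nat.log 2 (2 ^ k - 1) = k - 1 := by
  rcases k with _ | k
  · simp
  · have := Nat.one_le_two_pow (n := k)
    rw [Nat.add_sub_cancel]
    exact Nat.log_eq_of_pow_le_of_lt_pow (by rw [pow_succ] at *; omega) (by rw [pow_succ]; omega)

theorem length_gblock (n : ℕ) : (gblock n).length = Nat.log 2 n + 1 := by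
  unfold gblock; split <;> simp

theorem gblock_ne_nil (n : ℕ) : gblock n ≠ [] :=
  List.ne_nil_of_length_pos (by rw [length_gblock]; omega)

theorem eq_true_iff_of_mem_gblock {a : Bool} {n : ℕ} (ha : a ∈ gblock n) :
    a = true ↔ IsMersenne n := by
  unfold gblock at ha
  split_ifs at ha with h <;> simp [List.eq_of_mem_replicate ha, IsMersenne, h]

theorem blockEnd_gblock_succ (m : ℕ) :
    blockEnd gblock (m + 1) = blockEnd gblock m + (Nat.log 2 (m + 1) + 1) := by
  rw [blockEnd_succ, length_gblock]

theorem concatSeq_gblock_eq_true_iff {m i : ℕ} (h₁ : blockEnd gblock m < i)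
    (h₂ : i ≤ blockEnd gblock (m + 1)) : concatSeq gblock i = true ↔ IsMersenne (m + 1) :=
  eq_true_iff_of_mem_gblock (concatSeq_mem_block gblock_ne_nil h₁ h₂)

theorem blockEnd_gblock_le (K : ℕ) : blockEnd gblock (2 ^ K - 1) ≤ (2 ^ K - 1) * K :=
  blockEnd_le_mul fun k hk => by
    have := Nat.log_mono_right (b := 2) (show k + 1 ≤ 2 ^ K - 1 by omega)
    rw [Nat.log_two_pow_sub_one] at this
    have hK : K ≠ 0 := by rintro rfl; simp at hk
    rw [length_gblock]
    omega

theorem le_runL_gblock {k n : ℕ} (hn : blockEnd gblock (2 ^ k - 1) ≤ n) :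
    k ≤ runL (concatSeq gblock) n := by
  rcases Nat.eq_zero_or_pos k with rfl | hk
  · exact Nat.zero_le _
  have h2k : 2 ≤ 2 ^ k := Nat.le_self_pow (by omega) 2
  obtain ⟨m, hm⟩ : ∃ m, 2 ^ k - 1 = m + 1 := ⟨2 ^ k - 2, by omega⟩
  have hend : blockEnd gblock (m + 1) = blockEnd gblock m + k := by
    rw [blockEnd_gblock_succ, ← hm, Nat.log_two_pow_sub_one]; omega
  rw [hm] at hn
  refine le_runL (i := blockEnd gblock m) (by omega) fun t ht₁ ht₂ => ?_
  exact (concatSeq_gblock_eq_true_iff (by omega) (by omega)).2 ⟨k, hk, hm.symm⟩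

theorem runL_gblock_le {K n : ℕ} (hn : n ≤ blockEnd gblock (2 ^ K - 1)) :
    runL (concatSeq gblock) n ≤ K := by
  refine runL_le fun i j hij hrun => ?_
  rcases Nat.eq_zero_or_pos j with rfl | hj
  · exact Nat.zero_le _
  obtain ⟨m, hm₁, hm₂⟩ := exists_blockEnd_lt_le gblock_ne_nil (i := i + 1) (by omega)
  have hmer : IsMersenne (m + 1) := (concatSeq_gblock_eq_true_iff hm₁ hm₂).1 (hrun 1 le_rfl hj)
  -- the run cannot reach into block `m + 2`, which consists of zeros
  have hend : i + j ≤ blockEnd gblock (m + 1) := by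
    by_contra! h
    set p := blockEnd gblock (m + 1) + 1
    have hp : concatSeq gblock p = true := by
      simpa [show i + (p - i) = p by omega] using hrun (p - i) (by omega) (by omega)
    refine hmer.not_succ ((concatSeq_gblock_eq_true_iff (m := m + 1) (by omega) ?_).1 hp)
    rw [blockEnd_gblock_succ]; omega
  have hmK : m + 1 ≤ 2 ^ K - 1 :=
    (monotone_blockEnd gblock).reflect_lt (show blockEnd gblock m < _ by omega)
  have hlog := Nat.log_mono_right (b := 2) hmK
  rw [Nat.log_two_pow_sub_one] at hlog
  rw [blockEnd_gblock_succ] at hend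
  rcases K with _ | K
  · simp at hmK
  · omega

theorem two_pow_runL_gblock_le {n : ℕ} (hn : 1 ≤ n) : 2 ^ runL (concatSeq gblock) n ≤ 2 * n := by
  rcases h : runL (concatSeq gblock) n with _ | L
  · simp only [pow_zero]; omega
  by_contra! hlt
  have : n ≤ blockEnd gblock (2 ^ L - 1) := le_trans (by rw [pow_succ] at hlt; omega)
    (le_blockEnd gblock_ne_nil _)
  have := runL_gblock_le this
  omega

theorem le_two_pow_mul_runL_gblock (n : ℕ) :
    n ≤ 2 ^ (runL (concatSeq gblock) n + 1) * (runL (concatSeq gblock) n + 1) := by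
  set L := runL (concatSeq gblock) n
  have hlt : n < blockEnd gblock (2 ^ (L + 1) - 1) := by
    by_contra! h
    have := le_runL_gblock h
    omega
  have := blockEnd_gblock_le (L + 1)
  have := Nat.mul_le_mul_right (L + 1) (Nat.sub_le (2 ^ (L + 1)) 1)
  omega

theorem tendsto_runL_gblock : Tendsto (runL (concatSeq gblock)) atTop atTop :=
  tendsto_atTop_atTop.2 fun k => ⟨blockEnd gblock (2 ^ k - 1), fun _ hn => le_runL_gblock hn⟩

/-- The sequence `y = g(1) g(2) g(3) … = 1 00 11 000 000 000 111 …` is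
typical: `L_n(y)/log₂ n → 1`. -/
theorem gseq_typical : Typical (concatSeq gblock) :=
  tendsto_div_logb_of_pow_bounds tendsto_runL_gblock
    ((eventually_ge_atTop 1).mono fun _ => two_pow_runL_gblock_le) le_two_pow_mul_runL_gblock
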